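/- Any set P ⊆ {0,1}^n of pairwise non-dominating solutions (with respect to the bi-objective function f = (f₁, f₂)) has cardinality at most 2^k. -/

import Mathlib

/-- Number of leading positions on which `x` agrees with the target string `z`. -/
def LO (ℓ : ℕ) (z x : Fin ℓ → Bool) : ℕ :=
  (Finset.univ.filter (fun i : Fin ℓ => ∀ j ≤ i, x j = z j)).card

/-- The all-ones target string `z¹ = 1^ℓ`. -/
def zOne (ℓ : ℕ) : Fin ℓ → Bool := fun _ => true

/-- The target string `z² = 1^{ℓ-r} 0^r`. -/
def zTwo (ℓ r : ℕ) : Fin ℓ → Bool := fun i => decide (i.val < ℓ - r)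

/-- The first base function `f₁^B(w) = (ℓ+1)·LO_{z¹}(w) + LO_{z²}(w)`. -/
def f1B (ℓ r : ℕ) (w : Fin ℓ → Bool) : ℕ :=
  (ℓ + 1) * LO ℓ (zOne ℓ) w + LO ℓ (zTwo ℓ r) w

/-- The second base function `f₂^B(w) = (ℓ+1)·LO_{z²}(w) + LO_{z¹}(w)`. -/
def f2B (ℓ r : ℕ) (w : Fin ℓ → Bool) : ℕ :=
  (ℓ + 1) * LO ℓ (zTwo ℓ r) w + LO ℓ (zOne ℓ) w

/-- The base functions indexed by `m : Fin 2` (`0` for `f₁^B`, `1` for `f₂^B`). -/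
def fB (ℓ r : ℕ) (m : Fin 2) : (Fin ℓ → Bool) → ℕ :=
  if m = 0 then f1B ℓ r else f2B ℓ r

/-- The `b`-th block (0-based) of a bitstring of length `n = k·ℓ`. -/
def blockOf (k ℓ : ℕ) (x : Fin (k * ℓ) → Bool) (b : Fin k) : Fin ℓ → Bool :=
  fun j => x ⟨b.val * ℓ + j.val, by
    calc b.val * ℓ + j.val < b.val * ℓ + ℓ := Nat.add_lt_add_left j.isLt _
      _ = (b.val + 1) * ℓ := by ring
      _ ≤ k * ℓ := Nat.mul_le_mul_right ℓ b.isLt⟩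

/-- The full objective `f_m(x) = Σ_b (ℓ+1)^{2(k-b)} f_m^B(x_{B_b})` (with 0-based
block index `b`, so the paper's exponent `2(k-b)` becomes `2(k-1-b)`). -/
def fObj (k ℓ r : ℕ) (m : Fin 2) (x : Fin (k * ℓ) → Bool) : ℕ :=
  ∑ b : Fin k, (ℓ + 1) ^ (2 * (k - 1 - b.val)) * fB ℓ r m (blockOf k ℓ x b)

/-! Within a block, `LO_{z¹}` and `LO_{z²}` agree below `ℓ - r` and at most one of them exceeds
`ℓ - r`, so the smaller one is the minimum of the larger one and `ℓ - r`. Once we know which one is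
the larger (the block's signature), `f₁^B` and `f₂^B` are therefore both strictly increasing
functions of it. Since `f₁` and `f₂` read the blocks as base-`(ℓ+1)²` digits, most significant
first, two solutions with the same signature vector compare the same way under `f₁` and under
`f₂`, so one of them weakly dominates the other. A pairwise non-dominating set thus has at most one
solution per signature vector in `{0,1}^k`. -/

theorem cmp_mul_add_of_lt {B a a' s s' : ℕ} (hs : s < B) (hs' : s' < B) :
    cmp (B * a + s) (B * a' + s') = (cmp a a').then (cmp s s') := by
  rcases lt_trichotomy a a' with h | rfl | h
  · rw [h.cmp_eq_lt, (show B * a + s < B * a' + s' by nlinarith).cmp_eq_lt]; rfl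
  · rw [cmp_add_left, cmp_self_eq_eq]; rfl
  · rw [h.cmp_eq_gt, (show B * a' + s' < B * a + s by nlinarith).cmp_eq_gt]; rfl

theorem sum_pow_mul_succ (B k : ℕ) (d : Fin (k + 1) → ℕ) :
    ∑ b : Fin (k + 1), B ^ (k + 1 - 1 - b.val) * d b
      = B * ∑ b : Fin k, B ^ (k - 1 - b.val) * d b.castSucc + d (Fin.last k) := by
  rw [Fin.sum_univ_castSucc, Finset.mul_sum]
  congr 1
  · refine Finset.sum_congr rfl fun b _ => ?_
    rw [← mul_assoc, ← pow_succ', Fin.val_castSucc]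
    congr 2
    omega
  · simp

theorem cmp_sum_pow_mul_eq_of_cmp_eq {B : ℕ} : ∀ {k : ℕ} {d d' e e' : Fin k → ℕ},
    (∀ b, d b < B) → (∀ b, d' b < B) → (∀ b, e b < B) → (∀ b, e' b < B) →
    (∀ b, cmp (d b) (d' b) = cmp (e b) (e' b)) →
    cmp (∑ b, B ^ (k - 1 - b.val) * d b) (∑ b, B ^ (k - 1 - b.val) * d' b)
      = cmp (∑ b, B ^ (k - 1 - b.val) * e b) (∑ b, B ^ (k - 1 - b.val) * e' b)
  | 0, _, _, _, _, _, _, _, _, _ => by simp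
  | k + 1, d, d', e, e', hd, hd', he, he', h => by
    simp only [sum_pow_mul_succ]
    rw [cmp_mul_add_of_lt (hd _) (hd' _), cmp_mul_add_of_lt (he _) (he' _), h,
      cmp_sum_pow_mul_eq_of_cmp_eq (fun _ => hd _) (fun _ => hd' _) (fun _ => he _)
        (fun _ => he' _) fun _ => h _]

theorem mul_add_lt_sq {t a b : ℕ} (ha : a ≤ t) (hb : b ≤ t) : (t + 1) * a + b < (t + 1) ^ 2 := by
  nlinarith

theorem lt_LO_iff {ℓ : ℕ} (z x : Fin ℓ → Bool) (i : Fin ℓ) :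
    i.val < LO ℓ z x ↔ ∀ j ≤ i, x j = z j := by
  have hdown : ∀ a b : Fin ℓ, a ≤ b → (∀ j ≤ b, x j = z j) → ∀ j ≤ a, x j = z j :=
    fun a b hab hb j hj => hb j (hj.trans hab)
  constructor
  · intro h
    by_contra hi
    have hsub : Finset.univ.filter (fun a : Fin ℓ => ∀ j ≤ a, x j = z j) ⊆ Finset.Iio i :=
      fun a ha => Finset.mem_Iio.2 <| lt_of_not_ge fun hia =>
        hi (hdown i a hia (Finset.mem_filter.1 ha).2)
    have := Finset.card_le_card hsub
    rw [Fin.card_Iio] at this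
    exact (this.trans_lt h).false
  · intro h
    have hsub : Finset.Iic i ⊆ Finset.univ.filter (fun a : Fin ℓ => ∀ j ≤ a, x j = z j) :=
      fun a ha => Finset.mem_filter.2 ⟨Finset.mem_univ a, hdown a i (Finset.mem_Iic.1 ha) h⟩
    have := Finset.card_le_card hsub
    rw [Fin.card_Iic] at this
    exact this

theorem LO_le {ℓ : ℕ} (z x : Fin ℓ → Bool) : LO ℓ z x ≤ ℓ :=
  (Finset.card_filter_le _ _).trans_eq (Finset.card_fin ℓ)

theorem min_LO_eq_of_eqOn {ℓ c : ℕ} {z z' : Fin ℓ → Bool} (h : ∀ i : Fin ℓ, i.val < c → z i = z' i)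
    (x : Fin ℓ → Bool) : min (LO ℓ z x) c = min (LO ℓ z' x) c := by
  refine eq_of_forall_lt_iff fun m => ?_
  simp only [lt_min_iff]
  by_cases hm : m < ℓ
  · rw [lt_LO_iff z x ⟨m, hm⟩, lt_LO_iff z' x ⟨m, hm⟩]
    refine and_congr_left fun hmc => forall₂_congr fun j hj => ?_
    rw [h j (lt_of_le_of_lt hj hmc)]
  · have := LO_le z x
    have := LO_le z' x
    omega

theorem min_LO_le_of_ne {ℓ : ℕ} {z z' : Fin ℓ → Bool} {i : Fin ℓ} (h : z i ≠ z' i)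
    (x : Fin ℓ → Bool) : min (LO ℓ z x) (LO ℓ z' x) ≤ i := by
  by_contra! hi
  rw [lt_min_iff, lt_LO_iff, lt_LO_iff] at hi
  exact h ((hi.1 i le_rfl).symm.trans (hi.2 i le_rfl))

theorem min_LO_zOne_eq_min_LO_zTwo (ℓ r : ℕ) (w : Fin ℓ → Bool) :
    min (LO ℓ (zOne ℓ) w) (ℓ - r) = min (LO ℓ (zTwo ℓ r) w) (ℓ - r) :=
  min_LO_eq_of_eqOn (fun i hi => by simp [zOne, zTwo, hi]) w

theorem min_LO_zOne_LO_zTwo_le (ℓ r : ℕ) (w : Fin ℓ → Bool) :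
    min (LO ℓ (zOne ℓ) w) (LO ℓ (zTwo ℓ r) w) ≤ ℓ - r := by
  by_cases h : ℓ - r < ℓ
  · exact min_LO_le_of_ne (i := ⟨ℓ - r, h⟩) (by simp [zOne, zTwo]) w
  · exact (min_le_left _ _).trans ((LO_le _ w).trans (by omega))

theorem LO_zTwo_eq_min {ℓ r : ℕ} {w : Fin ℓ → Bool} (h : LO ℓ (zTwo ℓ r) w ≤ LO ℓ (zOne ℓ) w) :
    LO ℓ (zTwo ℓ r) w = min (LO ℓ (zOne ℓ) w) (ℓ - r) := by
  have := min_LO_zOne_eq_min_LO_zTwo ℓ r w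
  have := min_LO_zOne_LO_zTwo_le ℓ r w
  omega

theorem LO_zOne_eq_min {ℓ r : ℕ} {w : Fin ℓ → Bool} (h : LO ℓ (zOne ℓ) w ≤ LO ℓ (zTwo ℓ r) w) :
    LO ℓ (zOne ℓ) w = min (LO ℓ (zTwo ℓ r) w) (ℓ - r) := by
  have := min_LO_zOne_eq_min_LO_zTwo ℓ r w
  have := min_LO_zOne_LO_zTwo_le ℓ r w
  omega

theorem strictMono_mul_add_min {t : ℕ} (ht : 0 < t) (c : ℕ) :
    StrictMono fun a => t * a + min a c :=
  (strictMono_mul_left_of_pos ht).add_monotone fun _ _ h => min_le_min_right c h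

theorem strictMono_mul_min_add (t c : ℕ) : StrictMono fun a => t * min a c + a :=
  Monotone.add_strictMono (fun _ _ h => Nat.mul_le_mul_left t (min_le_min_right c h))
    strictMono_id

theorem cmp_f1B_eq_cmp_f2B {ℓ r : ℕ} {w v : Fin ℓ → Bool}
    (hs : LO ℓ (zTwo ℓ r) w ≤ LO ℓ (zOne ℓ) w ↔ LO ℓ (zTwo ℓ r) v ≤ LO ℓ (zOne ℓ) v) :
    cmp (f1B ℓ r w) (f1B ℓ r v) = cmp (f2B ℓ r w) (f2B ℓ r v) := by
  unfold f1B f2B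
  by_cases hw : LO ℓ (zTwo ℓ r) w ≤ LO ℓ (zOne ℓ) w
  · rw [LO_zTwo_eq_min hw, LO_zTwo_eq_min (hs.1 hw),
      (strictMono_mul_add_min ℓ.succ_pos (ℓ - r)).cmp_map_eq,
      (strictMono_mul_min_add (ℓ + 1) (ℓ - r)).cmp_map_eq]
  · have hv : LO ℓ (zOne ℓ) v ≤ LO ℓ (zTwo ℓ r) v := le_of_not_ge (mt hs.2 hw)
    rw [LO_zOne_eq_min (le_of_not_ge hw), LO_zOne_eq_min hv,
      (strictMono_mul_add_min ℓ.succ_pos (ℓ - r)).cmp_map_eq,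
      (strictMono_mul_min_add (ℓ + 1) (ℓ - r)).cmp_map_eq]

def blockSignature (k ℓ r : ℕ) (x : Fin (k * ℓ) → Bool) (b : Fin k) : Bool :=
  decide (LO ℓ (zTwo ℓ r) (blockOf k ℓ x b) ≤ LO ℓ (zOne ℓ) (blockOf k ℓ x b))

theorem cmp_fObj_eq_of_blockSignature_eq {k ℓ r : ℕ} {x y : Fin (k * ℓ) → Bool}
    (h : blockSignature k ℓ r x = blockSignature k ℓ r y) :
    cmp (fObj k ℓ r 0 x) (fObj k ℓ r 0 y) = cmp (fObj k ℓ r 1 x) (fObj k ℓ r 1 y) := by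
  have hsig (b : Fin k) := by simpa only [blockSignature, decide_eq_decide] using congrFun h b
  have hf1B (w : Fin ℓ → Bool) := mul_add_lt_sq (LO_le (zOne ℓ) w) (LO_le (zTwo ℓ r) w)
  have hf2B (w : Fin ℓ → Bool) := mul_add_lt_sq (LO_le (zTwo ℓ r) w) (LO_le (zOne ℓ) w)
  simp only [fObj, fB, pow_mul, ↓reduceIte, one_ne_zero]
  exact cmp_sum_pow_mul_eq_of_cmp_eq (fun _ => hf1B _) (fun _ => hf1B _) (fun _ => hf2B _)
    (fun _ => hf2B _) fun b => cmp_f1B_eq_cmp_f2B (hsig b)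

theorem stmt_9_general (k ℓ r : ℕ)
    (P : Finset (Fin (k * ℓ) → Bool))
    (hP : ∀ x ∈ P, ∀ y ∈ P, x ≠ y →
      ¬(fObj k ℓ r 0 x ≥ fObj k ℓ r 0 y ∧ fObj k ℓ r 1 x ≥ fObj k ℓ r 1 y)) :
    P.card ≤ 2 ^ k := by
  have hinj : Set.InjOn (blockSignature k ℓ r) P := by
    intro x hx y hy hxy
    by_contra hne
    have hcmp := cmp_fObj_eq_of_blockSignature_eq hxy
    rcases le_total (fObj k ℓ r 0 y) (fObj k ℓ r 0 x) with h | h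
    · exact hP x hx y hy hne ⟨h, (le_iff_le_of_cmp_eq_cmp (cmp_eq_cmp_symm.1 hcmp)).1 h⟩
    · exact hP y hy x hx (Ne.symm hne) ⟨h, (le_iff_le_of_cmp_eq_cmp hcmp).1 h⟩
  simpa using Finset.card_le_card_of_injOn _ (fun _ _ => Finset.mem_univ _) hinj

/-- Any set of pairwise non-dominating solutions (with respect to
the bi-objective function `f = (f₁, f₂)`) has cardinality at most `2^k`. -/
theorem stmt_9 (k ℓ r : ℕ) (hk : 0 < k) (hℓ : 0 < ℓ) (hr1 : 1 ≤ r) (hr : r ≤ ℓ)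
    (P : Finset (Fin (k * ℓ) → Bool))
    (hP : ∀ x ∈ P, ∀ y ∈ P, x ≠ y →
      ¬(fObj k ℓ r 0 x ≥ fObj k ℓ r 0 y ∧ fObj k ℓ r 1 x ≥ fObj k ℓ r 1 y)) :
    P.card ≤ 2 ^ k :=
  stmt_9_general k ℓ r P hP
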